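/- arXiv:1101.0447 — 2 statements merged into one kernel-verified Lean document; each statement's English description precedes it below -/
import Mathlib

section
/- Let ψ : (0,∞) → [0,1] be given by ψ(x) = ∫_{[0,∞)} e^{-sx} dμ(s) for a nonnegative Borel measure μ, and suppose e^{ρx} ψ(x) → 0 as x → ∞ for some ρ > 0. Then μ([0,ρ]) = 0 and x ↦ e^{ρx} ψ(x) is completely monotone on (0,∞). -/
noncomputable section
open MeasureTheory Set Filter

/-- A function is completely monotone on `(0,∞)` if it is infinitely differentiable
there and `(-1)^n f^(n) ≥ 0` for every `n`. -/
def CompletelyMonotoneOn (f : ℝ → ℝ) : Prop :=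
  ContDiffOn ℝ (⊤ : ℕ∞) f (Set.Ioi 0) ∧
  ∀ (n : ℕ), ∀ x ∈ Set.Ioi (0:ℝ), 0 ≤ (-1:ℝ)^n * iteratedDerivWithin n f (Set.Ioi 0) x

private lemma pow_le_exp_aux (n : ℕ) {c t : ℝ} (hc : 0 < c) (ht : 0 ≤ t) :
    t ^ n ≤ n.factorial * c⁻¹ ^ n * Real.exp (c * t) := by
  have h1 : (c * t) ^ n / n.factorial ≤ Real.exp (c * t) := by
    refine le_trans ?_ (Real.sum_le_exp_of_nonneg (mul_nonneg hc.le ht) (n + 1))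
    exact Finset.single_le_sum (f := fun i => (c * t) ^ i / i.factorial)
      (fun i _ => by positivity) (Finset.self_mem_range_succ n)
  have h2 : (c * t) ^ n ≤ Real.exp (c * t) * n.factorial := by
    rw [div_le_iff₀ (by positivity)] at h1; exact h1
  calc t ^ n = (c * t) ^ n * c⁻¹ ^ n := by
        rw [← mul_pow, mul_comm c t, mul_assoc, mul_inv_cancel₀ hc.ne', mul_one]
    _ ≤ (Real.exp (c * t) * n.factorial) * c⁻¹ ^ n := by
        exact mul_le_mul_of_nonneg_right h2 (by positivity)
    _ = n.factorial * c⁻¹ ^ n * Real.exp (c * t) := by ring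

private lemma aux_bound (n : ℕ) {ρ s y c M : ℝ} (hρ : 0 ≤ ρ) (hs : 0 ≤ s) (hc : 0 < c)
    (hy : 2 * c ≤ y) (hM : y ≤ M) :
    |ρ - s| ^ n * Real.exp ((ρ - s) * y) ≤
      (n.factorial * c⁻¹ ^ n * Real.exp (c * ρ + ρ * M)) * Real.exp (-s * c) := by
  have habs : |ρ - s| ≤ ρ + s := abs_le.2 ⟨by linarith, by linarith⟩
  have h1 : |ρ - s| ^ n ≤ (ρ + s) ^ n := pow_le_pow_left₀ (abs_nonneg _) habs n
  have h2 : (ρ + s) ^ n ≤ n.factorial * c⁻¹ ^ n * Real.exp (c * (ρ + s)) :=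
    pow_le_exp_aux n hc (by linarith)
  have h3 : Real.exp ((ρ - s) * y) ≤ Real.exp (ρ * M + -s * (2 * c)) := by
    apply Real.exp_le_exp.2
    nlinarith [mul_nonneg hρ (sub_nonneg.2 hM), mul_nonneg hs (sub_nonneg.2 hy)]
  calc |ρ - s| ^ n * Real.exp ((ρ - s) * y)
      ≤ (n.factorial * c⁻¹ ^ n * Real.exp (c * (ρ + s))) * Real.exp (ρ * M + -s * (2 * c)) := by
        exact mul_le_mul (h1.trans h2) h3 (Real.exp_pos _).le (by positivity)
    _ = (n.factorial * c⁻¹ ^ n * Real.exp (c * ρ + ρ * M)) * Real.exp (-s * c) := by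
        simp only [mul_assoc, ← Real.exp_add]
        congr 3
        ring

set_option maxHeartbeats 1000000

theorem stmt3 (μ : Measure ℝ) (ψ : ℝ → ℝ) (ρ : ℝ) (hρ : 0 < ρ)
    (hint : ∀ x ∈ Set.Ioi (0:ℝ), IntegrableOn (fun s => Real.exp (-s*x)) (Set.Ici 0) μ)
    (hψ : ∀ x ∈ Set.Ioi (0:ℝ), ψ x = ∫ s in Set.Ici (0:ℝ), Real.exp (-s*x) ∂μ)
    (hrange : ∀ x ∈ Set.Ioi (0:ℝ), ψ x ∈ Set.Icc (0:ℝ) 1)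
    (hlim : Tendsto (fun x => Real.exp (ρ*x) * ψ x) atTop (nhds 0)) :
    μ (Set.Icc 0 ρ) = 0 ∧ CompletelyMonotoneOn (fun x => Real.exp (ρ*x) * ψ x) := by
  -- measurability of the real integrands
  have hcont : ∀ (n : ℕ) (y : ℝ), Continuous (fun s : ℝ => (ρ - s) ^ n * Real.exp ((ρ - s) * y)) := by
    intro n y; fun_prop
  have hmeas : ∀ (n : ℕ) (y : ℝ), AEStronglyMeasurable
      (fun s : ℝ => (ρ - s) ^ n * Real.exp ((ρ - s) * y)) (μ.restrict (Ici 0)) :=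
    fun n y => (hcont n y).aestronglyMeasurable
  -- integrability of the real integrands
  have hIntG : ∀ (n : ℕ), ∀ x ∈ Ioi (0:ℝ),
      IntegrableOn (fun s => (ρ - s) ^ n * Real.exp ((ρ - s) * x)) (Ici 0) μ := by
    intro n x hx
    have hx0 : (0:ℝ) < x := hx
    have hx2 : (0:ℝ) < x / 2 := by linarith
    refine Integrable.mono'
      ((hint (x/2) (mem_Ioi.2 hx2)).const_mul
        ((n.factorial : ℝ) * (x/2)⁻¹ ^ n * Real.exp ((x/2) * ρ + ρ * x))) (hmeas n x) ?_
    filter_upwards [ae_restrict_mem measurableSet_Ici] with s hs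
    have hb := aux_bound n hρ.le hs hx2 (by linarith : 2 * (x/2) ≤ x) (le_refl x)
    calc ‖(ρ - s) ^ n * Real.exp ((ρ - s) * x)‖ = |ρ - s| ^ n * Real.exp ((ρ - s) * x) := by
          rw [norm_mul, norm_pow, Real.norm_eq_abs, Real.norm_eq_abs, Real.abs_exp]
      _ ≤ _ := hb
  -- differentiation under the integral sign (real case)
  have hDeriv : ∀ (n : ℕ), ∀ x ∈ Ioi (0:ℝ),
      HasDerivAt (fun y => ∫ s in Ici (0:ℝ), (ρ - s) ^ n * Real.exp ((ρ - s) * y) ∂μ)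
        (∫ s in Ici (0:ℝ), (ρ - s) ^ (n+1) * Real.exp ((ρ - s) * x) ∂μ) x := by
    intro n x hx
    have hx0 : (0:ℝ) < x := hx
    have hx4 : (0:ℝ) < x / 4 := by linarith
    have H := hasDerivAt_integral_of_dominated_loc_of_deriv_le (μ := μ.restrict (Ici 0))
      (F := fun y s => (ρ - s) ^ n * Real.exp ((ρ - s) * y))
      (F' := fun y s => (ρ - s) ^ (n+1) * Real.exp ((ρ - s) * y))
      (bound := fun s => (((n+1).factorial : ℝ) * (x/4)⁻¹ ^ (n+1) *
        Real.exp ((x/4) * ρ + ρ * (2*x))) * Real.exp (-s * (x/4)))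
      (x₀ := x) (s := Metric.ball x (x/2)) (Metric.ball_mem_nhds x (by linarith))
      (Eventually.of_forall fun y => hmeas n y)
      (hIntG n x hx)
      (hmeas (n+1) x)
      ?_ ((hint (x/4) (mem_Ioi.2 hx4)).const_mul _) ?_
    · exact H.2
    · filter_upwards [ae_restrict_mem measurableSet_Ici] with s hs
      intro y hy
      rw [Metric.mem_ball, Real.dist_eq, abs_sub_lt_iff] at hy
      have h1 : 2 * (x/4) ≤ y := by linarith [hy.2]
      have h2 : y ≤ 2 * x := by linarith [hy.1]
      have hb := aux_bound (n+1) hρ.le hs hx4 h1 h2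
      calc ‖(ρ - s) ^ (n+1) * Real.exp ((ρ - s) * y)‖
          = |ρ - s| ^ (n+1) * Real.exp ((ρ - s) * y) := by
            rw [norm_mul, norm_pow, Real.norm_eq_abs, Real.norm_eq_abs, Real.abs_exp]
        _ ≤ _ := hb
    · refine Eventually.of_forall fun s => fun y _ => ?_
      have h0 : HasDerivAt (fun y : ℝ => (ρ - s) * y) (ρ - s) y := by
        simpa using (hasDerivAt_id y).const_mul (ρ - s)
      have h := (h0.exp).const_mul ((ρ - s) ^ n)
      convert h using 1
      all_goals first | rfl | ring
  -- the basic identity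
  have hf_eq : ∀ x ∈ Ioi (0:ℝ),
      Real.exp (ρ*x) * ψ x = ∫ s in Ici (0:ℝ), Real.exp ((ρ - s) * x) ∂μ := by
    intro x hx
    rw [hψ x hx, ← integral_const_mul]
    refine integral_congr_ae (Eventually.of_forall fun s => ?_)
    show Real.exp (ρ*x) * Real.exp (-s*x) = Real.exp ((ρ - s) * x)
    rw [← Real.exp_add]
    congr 1
    ring
  have hIexp : ∀ x ∈ Ioi (0:ℝ), IntegrableOn (fun s => Real.exp ((ρ - s) * x)) (Ici 0) μ := by
    intro x hx
    simpa using hIntG 0 x hx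
  -- finiteness of μ (Icc 0 ρ)
  have hres : μ.restrict (Ici 0) (Icc 0 ρ) = μ (Icc 0 ρ) := by
    rw [Measure.restrict_apply measurableSet_Icc, inter_eq_left.2 Icc_subset_Ici_self]
  have hfin : μ (Icc 0 ρ) < ⊤ := by
    have h1 : IntegrableOn (fun s => Real.exp (-s*1)) (Ici 0) μ := hint 1 (by simp)
    have h2 := h1.measure_ge_lt_top (show (0:ℝ) < Real.exp (-ρ*1) from Real.exp_pos _)
    refine lt_of_le_of_lt ?_ h2
    rw [← hres]
    apply measure_mono
    intro s hs
    simp only [mem_Icc] at hs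
    simp only [mem_setOf_eq]
    exact Real.exp_le_exp.2 (by nlinarith)
  -- the first part
  have hle : ∀ x ∈ Ioi (0:ℝ), (μ (Icc 0 ρ)).toReal ≤ Real.exp (ρ*x) * ψ x := by
    intro x hx
    have hx0 : (0:ℝ) < x := hx
    rw [hf_eq x hx]
    calc (μ (Icc 0 ρ)).toReal = ∫ _ in Icc (0:ℝ) ρ, (1:ℝ) ∂μ := by
          rw [setIntegral_const]; simp [Measure.real]
      _ ≤ ∫ s in Icc (0:ℝ) ρ, Real.exp ((ρ - s) * x) ∂μ := by
          refine setIntegral_mono_on (integrableOn_const hfin.ne)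
            ((hIexp x hx).mono_set Icc_subset_Ici_self) measurableSet_Icc ?_
          intro s hs
          simp only [mem_Icc] at hs
          exact Real.one_le_exp (mul_nonneg (by linarith) hx0.le)
      _ ≤ _ := setIntegral_mono_set (hIexp x hx)
          (Eventually.of_forall fun s => (Real.exp_pos _).le)
          (HasSubset.Subset.eventuallyLE Icc_subset_Ici_self)
  have htr : (μ (Icc 0 ρ)).toReal = 0 :=
    le_antisymm (ge_of_tendsto hlim ((eventually_gt_atTop 0).mono fun x hx => hle x hx))
      ENNReal.toReal_nonneg
  have hμ0 : μ (Icc 0 ρ) = 0 := by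
    rcases (ENNReal.toReal_eq_zero_iff _).1 htr with h | h
    · exact h
    · exact absurd h hfin.ne
  -- a.e. s, ρ < s
  have hae : ∀ᵐ s ∂(μ.restrict (Ici 0)), ρ < s := by
    have h1 : μ.restrict (Ici 0) (Icc 0 ρ) = 0 := by rw [hres]; exact hμ0
    filter_upwards [ae_restrict_mem measurableSet_Ici, measure_eq_zero_iff_ae_notMem.1 h1]
      with s hs1 hs2
    simp only [mem_Icc, not_and, not_le] at hs2
    exact hs2 hs1
  -- identification of the iterated derivatives
  have hG : ∀ (n : ℕ), ∀ x ∈ Ioi (0:ℝ),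
      iteratedDerivWithin n (fun x => Real.exp (ρ*x) * ψ x) (Ioi 0) x
        = ∫ s in Ici (0:ℝ), (ρ - s) ^ n * Real.exp ((ρ - s) * x) ∂μ := by
    intro n
    induction n with
    | zero =>
      intro x hx
      simp only [iteratedDerivWithin_zero, pow_zero, one_mul]
      exact hf_eq x hx
    | succ n ih =>
      intro x hx
      rw [iteratedDerivWithin_succ,
        derivWithin_of_isOpen isOpen_Ioi hx]
      have hev : iteratedDerivWithin n (fun x => Real.exp (ρ*x) * ψ x) (Ioi 0)
          =ᶠ[nhds x] (fun y => ∫ s in Ici (0:ℝ), (ρ - s) ^ n * Real.exp ((ρ - s) * y) ∂μ) := by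
        filter_upwards [isOpen_Ioi.mem_nhds hx] with y hy using ih y hy
      rw [hev.deriv_eq]
      exact (hDeriv n x hx).deriv
  -- complex analyticity
  have hΦmeas : ∀ z : ℂ, AEStronglyMeasurable
      (fun s : ℝ => Complex.exp (↑(ρ - s) * z)) (μ.restrict (Ici 0)) := by
    intro z
    apply Continuous.aestronglyMeasurable
    fun_prop
  have hΦmeas' : ∀ z : ℂ, AEStronglyMeasurable
      (fun s : ℝ => (↑(ρ - s) : ℂ) * Complex.exp (↑(ρ - s) * z)) (μ.restrict (Ici 0)) := by
    intro z
    apply Continuous.aestronglyMeasurable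
    fun_prop
  have hnormF : ∀ (s : ℝ) (z : ℂ), ‖Complex.exp (↑(ρ - s) * z)‖ = Real.exp ((ρ - s) * z.re) := by
    intro s z
    rw [Complex.norm_exp]
    congr 1
    simp [Complex.mul_re]
  have hΦint : ∀ z : ℂ, 0 < z.re →
      Integrable (fun s : ℝ => Complex.exp (↑(ρ - s) * z)) (μ.restrict (Ici 0)) := by
    intro z hz
    refine Integrable.mono'
      ((hint z.re (mem_Ioi.2 hz)).const_mul (Real.exp (ρ * z.re))) (hΦmeas z) ?_
    refine Eventually.of_forall fun s => ?_
    rw [hnormF s z, ← Real.exp_add]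
    exact le_of_eq (by congr 1; ring)
  have hΦderiv : ∀ z : ℂ, 0 < z.re →
      HasDerivAt (fun z : ℂ => ∫ s in Ici (0:ℝ), Complex.exp (↑(ρ - s) * z) ∂μ)
        (∫ s in Ici (0:ℝ), (↑(ρ - s) : ℂ) * Complex.exp (↑(ρ - s) * z) ∂μ) z := by
    intro z hz
    have hx4 : (0:ℝ) < z.re / 4 := by linarith
    have hev : ∀ᶠ w in nhds z, AEStronglyMeasurable
        (fun s : ℝ => Complex.exp (↑(ρ - s) * w)) (μ.restrict (Ici 0)) :=
      Eventually.of_forall fun w => hΦmeas w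
    have hbd : ∀ᵐ (s : ℝ) ∂(μ.restrict (Ici 0)), ∀ w ∈ Metric.ball z (z.re/2),
        ‖(↑(ρ - s) : ℂ) * Complex.exp (↑(ρ - s) * w)‖ ≤
          (((1:ℕ).factorial : ℝ) * (z.re/4)⁻¹ ^ 1 *
            Real.exp ((z.re/4) * ρ + ρ * (2 * z.re))) * Real.exp (-s * (z.re/4)) := by
      filter_upwards [ae_restrict_mem measurableSet_Ici] with s hs
      intro w hw
      rw [Metric.mem_ball, Complex.dist_eq] at hw
      have hre : |w.re - z.re| < z.re / 2 := by
        calc |w.re - z.re| = |(w - z).re| := by rw [Complex.sub_re]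
          _ ≤ ‖w - z‖ := Complex.abs_re_le_norm _
          _ < z.re / 2 := hw
      rw [abs_sub_lt_iff] at hre
      have h1 : 2 * (z.re/4) ≤ w.re := by linarith [hre.2]
      have h2 : w.re ≤ 2 * z.re := by linarith [hre.1]
      have hb := aux_bound 1 hρ.le hs hx4 h1 h2
      calc ‖(↑(ρ - s) : ℂ) * Complex.exp (↑(ρ - s) * w)‖
          = |ρ - s| ^ 1 * Real.exp ((ρ - s) * w.re) := by
            rw [norm_mul, hnormF s w, pow_one, Complex.norm_real, Real.norm_eq_abs]
        _ ≤ _ := hb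
    have hdif : ∀ᵐ (s : ℝ) ∂(μ.restrict (Ici 0)), ∀ w ∈ Metric.ball z (z.re/2),
        HasDerivAt (fun w : ℂ => Complex.exp (↑(ρ - s) * w))
          ((↑(ρ - s) : ℂ) * Complex.exp (↑(ρ - s) * w)) w := by
      refine Eventually.of_forall fun s => fun w _ => ?_
      have h0 : HasDerivAt (fun w : ℂ => (↑(ρ - s) : ℂ) * w) (↑(ρ - s) : ℂ) w := by
        simpa using (hasDerivAt_id w).const_mul ((↑(ρ - s) : ℂ))
      have h := h0.cexp
      simpa [mul_comm] using h
    have H := hasDerivAt_integral_of_dominated_loc_of_deriv_le (s := Metric.ball z (z.re/2)) (Metric.ball_mem_nhds z (by linarith))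
      hev (hΦint z hz) (hΦmeas' z) hbd
      ((hint (z.re/4) (mem_Ioi.2 hx4)).const_mul _) hdif
    exact H.2
  have hUopen : IsOpen {z : ℂ | 0 < z.re} := isOpen_lt continuous_const Complex.continuous_re
  have hAn : AnalyticOnNhd ℂ (fun z : ℂ => ∫ s in Ici (0:ℝ), Complex.exp (↑(ρ - s) * z) ∂μ)
      {z : ℂ | 0 < z.re} :=
    DifferentiableOn.analyticOnNhd
      (fun z hz => (hΦderiv z hz).differentiableAt.differentiableWithinAt) hUopen
  have hAnR : AnalyticOnNhd ℝ
      (fun x : ℝ => (∫ s in Ici (0:ℝ), Complex.exp (↑(ρ - s) * (x:ℂ)) ∂μ).re) (Ioi 0) := by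
    have h1 := hAn.restrictScalars (𝕜 := ℝ)
    have h2 := (Complex.reCLM.analyticOnNhd univ).comp
      (h1.comp (Complex.ofRealCLM.analyticOnNhd (Ioi 0))
        (fun x hx => by simpa using (hx : (0:ℝ) < x)))
      (mapsTo_univ _ _)
    exact h2
  have hEqC : ∀ x ∈ Ioi (0:ℝ),
      (∫ s in Ici (0:ℝ), Complex.exp (↑(ρ - s) * (x:ℂ)) ∂μ).re = Real.exp (ρ*x) * ψ x := by
    intro x hx
    have h1 : (fun s : ℝ => Complex.exp (↑(ρ - s) * (x:ℂ)))
        = fun s : ℝ => ((Real.exp ((ρ - s) * x) : ℝ) : ℂ) := by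
      funext s
      rw [← Complex.ofReal_mul, Complex.ofReal_exp]
    have h2 : (∫ s in Ici (0:ℝ), ((Real.exp ((ρ - s) * x) : ℝ) : ℂ) ∂μ)
        = ((∫ s in Ici (0:ℝ), Real.exp ((ρ - s) * x) ∂μ : ℝ) : ℂ) := integral_ofReal
    rw [h1, h2, Complex.ofReal_re]
    exact (hf_eq x hx).symm
  have hCD : ContDiffOn ℝ (⊤ : ℕ∞) (fun x => Real.exp (ρ*x) * ψ x) (Ioi 0) :=
    (hAnR.congr isOpen_Ioi (fun x hx => hEqC x hx)).contDiffOn isOpen_Ioi.uniqueDiffOn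
  refine ⟨hμ0, hCD, ?_⟩
  intro n x hx
  rw [hG n x hx, ← integral_const_mul]
  refine integral_nonneg_of_ae ?_
  filter_upwards [hae] with s hs
  have h1 : (-1:ℝ)^n * ((ρ - s)^n * Real.exp ((ρ - s) * x))
      = (s - ρ)^n * Real.exp ((ρ - s) * x) := by
    rw [← mul_assoc, ← mul_pow]
    congr 2
    ring
  rw [h1]
  exact mul_nonneg (pow_nonneg (by linarith) n) (Real.exp_pos _).le
end
end

section
/- The Weibull density f(x) = c r x^{r-1} e^{-c x^r} with c > 0 and 0 < r < 1 is completely monotone on (0,∞). -/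
noncomputable section
open MeasureTheory Set Filter

namespace Stmt13Aux

/-- sum of `a * x ^ p` over a list of pairs `(a, p)` -/
def psum (l : List (ℝ × ℝ)) (x : ℝ) : ℝ :=
  (l.map fun q => q.1 * x ^ q.2).sum

@[simp] lemma psum_nil (x : ℝ) : psum [] x = 0 := rfl

@[simp] lemma psum_cons (q : ℝ × ℝ) (l : List (ℝ × ℝ)) (x : ℝ) :
    psum (q :: l) x = q.1 * x ^ q.2 + psum l x := rfl

lemma psum_append (l₁ l₂ : List (ℝ × ℝ)) (x : ℝ) :
    psum (l₁ ++ l₂) x = psum l₁ x + psum l₂ x := by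
  induction l₁ with
  | nil => simp
  | cons q l ih => simp [ih]; ring

lemma psum_nonneg {l : List (ℝ × ℝ)} {x : ℝ} (hx : 0 < x)
    (hl : ∀ q ∈ l, 0 ≤ q.1) : 0 ≤ psum l x := by
  induction l with
  | nil => simp
  | cons q l ih =>
      simp only [psum_cons]
      have h1 : 0 ≤ q.1 := hl q (by simp)
      have h2 : 0 ≤ psum l x := ih fun q hq => hl q (by simp [hq])
      positivity

lemma hasDerivAt_psum (l : List (ℝ × ℝ)) {x : ℝ} (hx : 0 < x) :
    HasDerivAt (psum l) (psum (l.map fun q => (q.1 * q.2, q.2 - 1)) x) x := by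
  induction l with
  | nil => simp only [List.map_nil, psum_nil]; exact hasDerivAt_const x (0:ℝ)
  | cons q l ih =>
      have h : HasDerivAt (fun y : ℝ => q.1 * y ^ q.2) (q.1 * q.2 * x ^ (q.2 - 1)) x := by
        have := (Real.hasDerivAt_rpow_const (p := q.2) (Or.inl hx.ne')).const_mul q.1
        exact this.congr_deriv (by ring)
      have := h.add ih
      simp only [List.map_cons, psum_cons]
      exact this

lemma psum_map_shift (l : List (ℝ × ℝ)) (k e : ℝ) {x : ℝ} (hx : 0 < x) :
    psum (l.map fun q => (k * q.1, q.2 + e)) x = k * x ^ e * psum l x := by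
  induction l with
  | nil => simp
  | cons q l ih =>
      simp only [List.map_cons, psum_cons, ih]
      rw [Real.rpow_add hx]
      ring

lemma psum_map_neg (l : List (ℝ × ℝ)) (x : ℝ) :
    psum (l.map fun q => (-(q.1 * q.2), q.2 - 1)) x
      = - psum (l.map fun q => (q.1 * q.2, q.2 - 1)) x := by
  induction l with
  | nil => simp
  | cons q l ih =>
      simp only [List.map_cons, psum_cons, ih]
      ring

end Stmt13Aux

open Stmt13Aux in
theorem stmt13 (c r : ℝ) (hc : 0 < c) (hr0 : 0 < r) (hr1 : r < 1) :
    CompletelyMonotoneOn (fun x => c * r * x ^ (r - 1) * Real.exp (-c * x ^ r)) := by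
  set f : ℝ → ℝ := fun x => c * r * x ^ (r - 1) * Real.exp (-c * x ^ r) with hf
  have key : ∀ n : ℕ, ∃ l : List (ℝ × ℝ), (∀ q ∈ l, 0 ≤ q.1 ∧ q.2 ≤ 0) ∧
      ∀ x ∈ Set.Ioi (0:ℝ), iteratedDerivWithin n f (Set.Ioi 0) x
        = (-1:ℝ)^n * (Real.exp (-c * x ^ r) * psum l x) := by
    intro n
    induction n with
    | zero =>
        refine ⟨[(c * r, r - 1)], ?_, ?_⟩
        · rintro q hq
          simp only [List.mem_singleton] at hq
          subst hq
          refine ⟨by positivity, ?_⟩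
          show r - 1 ≤ 0
          linarith
        · intro x hx
          rw [iteratedDerivWithin_zero]
          simp [hf, psum]
          ring
    | succ n ih =>
        obtain ⟨l, hl, heq⟩ := ih
        refine ⟨(l.map fun q => (-(q.1 * q.2), q.2 - 1))
          ++ (l.map fun q => (c * r * q.1, q.2 + (r - 1))), ?_, ?_⟩
        · intro q hq
          rcases List.mem_append.1 hq with h | h <;>
            obtain ⟨p, hp, rfl⟩ := List.mem_map.1 h
          · obtain ⟨h1, h2⟩ := hl p hp
            constructor
            · simp only; nlinarith
            · simp only; linarith
          · obtain ⟨h1, h2⟩ := hl p hp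
            constructor
            · simp only; positivity
            · simp only; linarith
        · intro x hx
          have hx' : (0:ℝ) < x := hx
          -- derivative of the representation at x
          have hd : HasDerivAt (fun y => (-1:ℝ)^n * (Real.exp (-c * y ^ r) * psum l y))
              ((-1:ℝ)^(n+1) * (Real.exp (-c * x ^ r) *
                psum ((l.map fun q => (-(q.1 * q.2), q.2 - 1))
                  ++ (l.map fun q => (c * r * q.1, q.2 + (r - 1)))) x)) x := by
            have hu : HasDerivAt (fun y : ℝ => -c * y ^ r) (-c * (r * x ^ (r - 1))) x :=
              (Real.hasDerivAt_rpow_const (p := r) (Or.inl hx'.ne')).const_mul (-c)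
            have hexp : HasDerivAt (fun y : ℝ => Real.exp (-c * y ^ r))
                (Real.exp (-c * x ^ r) * (-c * (r * x ^ (r - 1)))) x :=
              hu.exp
            have hp := hasDerivAt_psum l hx'
            have := (hexp.mul hp).const_mul ((-1:ℝ)^n)
            refine HasDerivAt.congr_deriv this ?_
            rw [psum_append, psum_map_neg, psum_map_shift l (c*r) (r-1) hx']
            rw [pow_succ]
            ring
          -- rewrite the iterated derivative
          have hmem : Set.Ioi (0:ℝ) ∈ nhds x := isOpen_Ioi.mem_nhds hx
          have heq' : iteratedDerivWithin n f (Set.Ioi 0)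
              =ᶠ[nhds x] fun y => (-1:ℝ)^n * (Real.exp (-c * y ^ r) * psum l y) := by
            filter_upwards [hmem] with y hy using heq y hy
          calc iteratedDerivWithin (n+1) f (Set.Ioi 0) x
              = derivWithin (iteratedDerivWithin n f (Set.Ioi 0)) (Set.Ioi 0) x :=
                congrFun iteratedDerivWithin_succ x
            _ = deriv (iteratedDerivWithin n f (Set.Ioi 0)) x :=
                derivWithin_of_isOpen isOpen_Ioi hx
            _ = deriv (fun y => (-1:ℝ)^n * (Real.exp (-c * y ^ r) * psum l y)) x :=
                heq'.deriv_eq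
            _ = _ := hd.deriv
  constructor
  · intro x hx
    have hx' : (0:ℝ) < x := hx
    have h1 : ContDiffAt ℝ (⊤ : ℕ∞) (fun y : ℝ => y ^ (r - 1)) x :=
      Real.contDiffAt_rpow_const_of_ne hx'.ne'
    have h2 : ContDiffAt ℝ (⊤ : ℕ∞) (fun y : ℝ => y ^ r) x :=
      Real.contDiffAt_rpow_const_of_ne hx'.ne'
    exact ((contDiffAt_const.mul h1).mul
      (Real.contDiff_exp.contDiffAt.comp x (contDiffAt_const.mul h2))).contDiffWithinAt
  · intro n x hx
    obtain ⟨l, hl, heq⟩ := key n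
    rw [heq x hx, ← mul_assoc, ← mul_pow]
    have hx' : (0:ℝ) < x := hx
    have : ((-1:ℝ) * -1) ^ n = 1 := by norm_num
    rw [this, one_mul]
    have := psum_nonneg hx' (fun q hq => (hl q hq).1)
    positivity
end
end
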